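/- arXiv:2307.03302 — 6 statements merged into one kernel-verified Lean document; each statement's English description precedes it below -/
import Mathlib

section
/- Let G be a finite group, H a subgroup of G, and S a finite nonabelian simple group for which there exists a surjective group homomorphism from H onto S. Then there exist subgroups N ≤ K of G with N normal in K such that the quotient group K/N is simple and the order of S divides the order of K/N. -/
/-- If a finite group `G` has a subgroup `H` admitting a finite nonabelian simple quotient `S`,
then `G` has a subquotient `K/N` (with `N ⊴ K ≤ G`) that is simple and whose order is divisible
by the order of `S`. -/
theorem exists_simple_subquotient_of_subgroup_quotient {G : Type*} [Group G] [Finite G]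
    (H : Subgroup G) {S : Type*} [Group S] [Finite S] [IsSimpleGroup S]
    (hnab : ¬ ∀ a b : S, a * b = b * a)
    (f : H →* S) (hf : Function.Surjective f) :
    ∃ (K : Subgroup G) (N : Subgroup K) (hN : N.Normal),
      haveI := hN
      IsSimpleGroup (K ⧸ N) ∧ Nat.card S ∣ Nat.card (K ⧸ N) := by
  refine ⟨H, f.ker, inferInstance, ?_, ?_⟩
  · haveI : Nontrivial (H ⧸ f.ker) :=
      (QuotientGroup.quotientKerEquivOfSurjective f hf).toEquiv.nontrivial
    exact IsSimpleGroup.isSimpleGroup_of_surjective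
      (QuotientGroup.quotientKerEquivOfSurjective f hf).symm.toMonoidHom
      (QuotientGroup.quotientKerEquivOfSurjective f hf).symm.surjective
  · exact (Nat.card_congr (QuotientGroup.quotientKerEquivOfSurjective f hf).toEquiv).symm ▸ dvd_refl _
end

section
/- Let r and p be primes. If there exists an injective group homomorphism from PSL₂(ℤ/rℤ) into PSL₂(ℤ/pℤ), then r ≤ p. -/
/-!
The image in `PSL₂(ℤ/rℤ)` of the transvection `[[1, 1], [0, 1]]` has order `r`, so an embedding
forces `r` to divide `|PSL₂(ℤ/pℤ)|`, which divides `|GL₂(ℤ/pℤ)| = p (p - 1)² (p + 1)`. Hence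
`r ≤ p` unless `r = p + 1`, i.e. `p = 2` and `r = 3`; that case is excluded by
`|PSL₂(ℤ/3ℤ)| = 12 > 6 = |GL₂(ℤ/2ℤ)|`.
-/

open scoped MatrixGroups

namespace Matrix.SpecialLinearGroup

variable {ι F : Type*} [DecidableEq ι] [Fintype ι] [CommRing F]

lemma transvection_pow {i j : ι} (hij : i ≠ j) (b : F) (n : ℕ) :
    transvection hij b ^ n = transvection hij (n • b) := by
  induction n with
  | zero => simp
  | succ n ih => rw [pow_succ, ih, succ_nsmul, transvection_add]

lemma orderOf_mk_transvection (r : ℕ) [Fact r.Prime] [CharP F r] {i j : ι} (hij : i ≠ j)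
    {b : F} (hb : b ≠ 0) :
    orderOf (transvection hij b : ProjectiveSpecialLinearGroup ι F) = r := by
  apply orderOf_eq_prime
  · rw [← QuotientGroup.mk_pow, transvection_pow, nsmul_eq_mul, CharP.cast_eq_zero, zero_mul,
      transvection_coeff_zero, QuotientGroup.mk_one]
  · rwa [ne_eq, QuotientGroup.eq_one_iff, transvection_mem_center_iff]

lemma card_PSL_dvd_card_GL :
    Nat.card (ProjectiveSpecialLinearGroup ι F) ∣ Nat.card (GL ι F) :=
  (Subgroup.card_quotient_dvd_card _).trans (Subgroup.card_dvd_of_injective toGL toGL_injective)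

lemma range_toGL_eq_ker_det :
    (toGL : SpecialLinearGroup ι F →* GL ι F).range = GeneralLinearGroup.det.ker :=
  SetLike.coe_injective range_toGL

lemma card_mul_card_units [Nonempty ι] :
    Nat.card (SpecialLinearGroup ι F) * Nat.card Fˣ = Nat.card (GL ι F) := by
  rw [Subgroup.card_eq_card_quotient_mul_card_subgroup GeneralLinearGroup.det.ker, mul_comm,
    Nat.card_congr (QuotientGroup.quotientKerEquivOfSurjective _
      GeneralLinearGroup.det_surjective).toEquiv, ← range_toGL_eq_ker_det,
    Nat.card_congr (MonoidHom.ofInjective toGL_injective).toEquiv]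

lemma card_le_card_PSL_mul [IsDomain F] [Nonempty ι] :
    Nat.card (SpecialLinearGroup ι F) ≤
      Nat.card (ProjectiveSpecialLinearGroup ι F) * Fintype.card ι := by
  rw [Subgroup.card_eq_card_quotient_mul_card_subgroup (Subgroup.center _)]
  gcongr
  rw [Nat.card_congr (center_equiv_rootsOfUnity' (Classical.arbitrary ι)).toEquiv]
  exact card_rootsOfUnity _ _

lemma dvd_card_of_injective_PSL (r : ℕ) [Fact r.Prime] [CharP F r] [Nontrivial F] {i j : ι}
    (hij : i ≠ j) {G : Type*} [Group G] {f : ProjectiveSpecialLinearGroup ι F →* G}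
    (hf : Function.Injective f) : r ∣ Nat.card G := by
  rw [← orderOf_mk_transvection r hij (one_ne_zero : (1 : F) ≠ 0), ← orderOf_injective f hf]
  exact orderOf_dvd_natCard _

end Matrix.SpecialLinearGroup

lemma Matrix.card_GL_fin_two (F : Type*) [Field F] [Fintype F] :
    Nat.card (GL (Fin 2) F) =
      Fintype.card F * (Fintype.card F - 1) ^ 2 * (Fintype.card F + 1) := by
  rw [card_GL_field, Fin.prod_univ_two]
  obtain ⟨q, hq⟩ := Nat.exists_eq_add_one.mpr (Fintype.card_pos (α := F))
  rw [hq]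
  simp only [Fin.val_zero, Fin.val_one, pow_zero, pow_one, Nat.add_sub_cancel]
  rw [show (q + 1) ^ 2 - 1 = q * (q + 2) by ring_nf; omega,
    show (q + 1) ^ 2 - (q + 1) = (q + 1) * q by ring_nf; omega]
  ring

lemma Nat.Prime.eq_two_of_add_one_prime {p : ℕ} (hp : p.Prime) (hp' : (p + 1).Prime) : p = 2 := by
  rcases hp.eq_two_or_odd' with h | h
  · exact h
  · have := hp'.even_iff.mp h.add_one
    have := hp.two_le
    omega

lemma Nat.le_or_eq_add_one_of_prime_dvd {p r : ℕ} (hr : r.Prime) (hp : 1 < p)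
    (h : r ∣ p * (p - 1) ^ 2 * (p + 1)) : r ≤ p ∨ r = p + 1 := by
  rcases (Nat.Prime.dvd_mul hr).mp h with h | h
  · rcases (Nat.Prime.dvd_mul hr).mp h with h | h
    · exact Or.inl (Nat.le_of_dvd (by omega) h)
    · have := Nat.le_of_dvd (by omega) (hr.dvd_of_dvd_pow h)
      omega
  · have := Nat.le_of_dvd (by omega) h
    omega

open Matrix.SpecialLinearGroup in
lemma not_injective_PSL_three_to_PSL_two (f : PSL(2, ZMod 3) →* PSL(2, ZMod 2)) :
    ¬ Function.Injective f := by
  intro hf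
  have hSL3 : Nat.card (SL(2, ZMod 3)) = 24 := by
    have := card_mul_card_units (ι := Fin 2) (F := ZMod 3)
    rw [Matrix.card_GL_fin_two, Nat.card_eq_fintype_card (α := (ZMod 3)ˣ), ZMod.card_units,
      ZMod.card] at this
    omega
  have hPSL3 : 12 ≤ Nat.card (PSL(2, ZMod 3)) := by
    have := card_le_card_PSL_mul (ι := Fin 2) (F := ZMod 3)
    rw [hSL3, Fintype.card_fin] at this
    omega
  have hPSL2 : Nat.card (PSL(2, ZMod 2)) ≤ 6 := by
    have := Nat.le_of_dvd Nat.card_pos (card_PSL_dvd_card_GL (ι := Fin 2) (F := ZMod 2))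
    rwa [Matrix.card_GL_fin_two, ZMod.card] at this
  have := Nat.card_le_card_of_injective f hf
  omega

/-- If `PSL₂(ℤ/rℤ)` embeds into `PSL₂(ℤ/pℤ)` for primes `r` and `p`, then `r ≤ p`. -/
theorem le_of_psl2_embeds (r p : ℕ) (hr : r.Prime) (hp : p.Prime)
    (f : (Matrix.SpecialLinearGroup (Fin 2) (ZMod r) ⧸
            Subgroup.center (Matrix.SpecialLinearGroup (Fin 2) (ZMod r))) →*
          (Matrix.SpecialLinearGroup (Fin 2) (ZMod p) ⧸
            Subgroup.center (Matrix.SpecialLinearGroup (Fin 2) (ZMod p))))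
    (hf : Function.Injective f) : r ≤ p := by
  have : Fact r.Prime := ⟨hr⟩
  have : Fact p.Prime := ⟨hp⟩
  have hdvd : r ∣ p * (p - 1) ^ 2 * (p + 1) := by
    rw [← ZMod.card p, ← Matrix.card_GL_fin_two]
    exact (Matrix.SpecialLinearGroup.dvd_card_of_injective_PSL r
      (by decide : (0 : Fin 2) ≠ 1) hf).trans Matrix.SpecialLinearGroup.card_PSL_dvd_card_GL
  rcases Nat.le_or_eq_add_one_of_prime_dvd hr hp.one_lt hdvd with hle | rfl
  · exact hle
  · obtain rfl := hp.eq_two_of_add_one_prime hr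
    exact absurd hf (not_injective_PSL_three_to_PSL_two f)
end

section
/- Let (G_i)_{i ∈ ι} be a family of profinite groups and let G = ∏_{i ∈ ι} G_i with the product topology. Assume that for all i ≠ j in ι there is no finite nonabelian simple group that is a continuous quotient of both G_i and G_j. Let H be a closed subgroup of G such that (a) for every i ∈ ι the projection map H → G_i is surjective, and (b) the composition of the inclusion H → G with the quotient map G → G/cl([G,G]) is surjective, where cl([G,G]) denotes the topological closure of the commutator subgroup of G. Then H = G. -/
/-!
As `H` is closed, it suffices to show that it is dense, i.e. that it maps onto every finite
quotient `∏ i ∈ s, G i ⧸ N i` with `N i` open and normal. The image `K` there is a subdirect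
product which, together with the commutator subgroup, generates the whole product. Split the
product as `A × B` with `A` a single factor, and let `N = {b | (1, b) ∈ K}`. By Goursat's lemma
`B ⧸ N` is also a quotient of `A`, and the abelianization condition makes `B ⧸ N` perfect. So if
`B ⧸ N` were nontrivial, its simple quotients would be nonabelian and shared by `A` and some
factor of `B`. Hence `N = B` and, by induction on the number of factors, `K` is everything.
-/

open Function

def SharesNonabelianSimpleQuotient (A B : Type*) [Group A] [Group B] : Prop :=
  ∃ (S : Type) (_ : Group S), Finite S ∧ IsSimpleGroup S ∧ (¬ ∀ a b : S, a * b = b * a) ∧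
    (∃ f : A →* S, Surjective f) ∧ (∃ g : B →* S, Surjective g)

theorem map_commutator_of_surjective {G G' : Type*} [Group G] [Group G'] {f : G →* G'}
    (hf : Surjective f) : (commutator G).map f = commutator G' := by
  simpa only [derivedSeries_one] using map_derivedSeries_eq hf 1

theorem commutator_eq_top_of_surjective {G G' : Type*} [Group G] [Group G']
    (hG : commutator G = ⊤) {f : G →* G'} (hf : Surjective f) : commutator G' = ⊤ := by
  rw [← map_commutator_of_surjective hf, hG, Subgroup.map_top_of_surjective f hf]

theorem map_sup_commutator_eq_top {G G' : Type*} [Group G] [Group G'] {K : Subgroup G}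
    (hK : K ⊔ commutator G = ⊤) {f : G →* G'} (hf : Surjective f) :
    K.map f ⊔ commutator G' = ⊤ := by
  rw [← map_commutator_of_surjective hf, ← Subgroup.map_sup, hK,
    Subgroup.map_top_of_surjective f hf]

theorem not_commutative_of_commutator_eq_top {G : Type*} [Group G] [Nontrivial G]
    (hG : commutator G = ⊤) : ¬ ∀ a b : G, a * b = b * a := fun hcomm =>
  top_ne_bot (hG ▸ (commutator_eq_bot_iff G).mpr ⟨⟨hcomm⟩⟩)

theorem exists_isSimpleGroup_quotient (G : Type*) [Group G] [Finite G] [Nontrivial G] :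
    ∃ (N : Subgroup G) (_ : N.Normal), IsSimpleGroup (G ⧸ N) := by
  obtain ⟨N, ⟨hN, hNtop⟩, hmax⟩ :=
    (Set.toFinite {N : Subgroup G | N.Normal ∧ N ≠ ⊤}).exists_maximal
      ⟨⊥, inferInstance, bot_ne_top⟩
  refine ⟨N, hN, ?_⟩
  have : Nontrivial (G ⧸ N) := by
    rwa [← not_subsingleton_iff_nontrivial, QuotientGroup.subsingleton_iff]
  refine ⟨fun L hL => ?_⟩
  have hNL : N ≤ L.comap (QuotientGroup.mk' N) := fun n hn => by
    simp [(QuotientGroup.eq_one_iff n).mpr hn]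
  rw [← Subgroup.map_comap_eq_self_of_surjective (QuotientGroup.mk'_surjective N) L]
  by_cases htop : L.comap (QuotientGroup.mk' N) = ⊤
  · exact Or.inr (htop ▸ Subgroup.map_top_of_surjective _ (QuotientGroup.mk'_surjective N))
  · left
    rw [le_antisymm (hmax ⟨hL.comap _, htop⟩ hNL) hNL, QuotientGroup.map_mk'_self]

theorem exists_nonabelian_simple_quotient_of_commutator_eq_top (G : Type*) [Group G] [Finite G]
    [Nontrivial G] (hG : commutator G = ⊤) :
    ∃ (S : Type) (_ : Group S), Finite S ∧ IsSimpleGroup S ∧ (¬ ∀ a b : S, a * b = b * a) ∧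
      ∃ f : G →* S, Surjective f := by
  obtain ⟨N, hN, hS⟩ := exists_isSimpleGroup_quotient G
  have : Small.{0} (G ⧸ N) := Countable.toSmall _
  let e : Shrink.{0} (G ⧸ N) ≃* G ⧸ N := Shrink.mulEquiv
  have hf : Surjective (e.symm.toMonoidHom.comp (QuotientGroup.mk' N)) :=
    e.symm.surjective.comp (QuotientGroup.mk'_surjective N)
  have : Nontrivial (Shrink.{0} (G ⧸ N)) := e.toEquiv.nontrivial
  exact ⟨_, _, Finite.of_equiv _ e.toEquiv.symm, e.isSimpleGroup,
    not_commutative_of_commutator_eq_top (commutator_eq_top_of_surjective hG hf), _, hf⟩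

theorem IsSimpleGroup.exists_surjective_comp_mulSingle {ι : Type*} [Finite ι] [DecidableEq ι]
    {Q : ι → Type*} [∀ i, Group (Q i)] {S : Type*} [Group S] [IsSimpleGroup S]
    {φ : (∀ i, Q i) →* S} (hφ : Surjective φ) :
    ∃ i, Surjective (φ.comp (MonoidHom.mulSingle Q i)) := by
  by_contra! h
  have hker : ∀ i, (φ.comp (MonoidHom.mulSingle Q i)).range = ⊥ := by
    intro i
    refine ((Subgroup.Normal.mk fun s hs t => ?_).eq_bot_or_eq_top).resolve_right
      (mt MonoidHom.range_eq_top.mp (h i))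
    obtain ⟨x, rfl⟩ := hs
    obtain ⟨y, rfl⟩ := hφ t
    refine ⟨y i * x * (y i)⁻¹, ?_⟩
    have hconj : Pi.mulSingle i (y i * x * (y i)⁻¹) = y * Pi.mulSingle i x * y⁻¹ := by
      funext j
      rcases eq_or_ne j i with rfl | hj <;> simp [Pi.mulSingle_eq_of_ne, *]
    simp [hconj]
  obtain ⟨s, hs⟩ := exists_ne (1 : S)
  obtain ⟨x, rfl⟩ := hφ s
  exact hs <| Subgroup.pi_mem_of_mulSingle_mem (H := φ.ker) x fun i =>
    MonoidHom.mem_ker.mpr (DFunLike.congr_fun (MonoidHom.range_eq_bot_iff.mp (hker i)) (x i))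

theorem not_sharesNonabelianSimpleQuotient_pi {A ι : Type*} [Group A] [Finite ι]
    {Q : ι → Type*} [∀ i, Group (Q i)] (h : ∀ i, ¬ SharesNonabelianSimpleQuotient A (Q i)) :
    ¬ SharesNonabelianSimpleQuotient A (∀ i, Q i) := by
  classical
  rintro ⟨S, _, hfin, hsimple, hnab, hf, g, hg⟩
  obtain ⟨i, hi⟩ := IsSimpleGroup.exists_surjective_comp_mulSingle hg
  exact h i ⟨S, _, hfin, hsimple, hnab, hf, _, hi⟩

theorem commutator_eq_top_of_sup_commutator_prod_eq_top {A B C : Type*} [Group A] [Group B]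
    [Group C] {K : Subgroup (A × B)} (hK : K ⊔ commutator (A × B) = ⊤) (f : A →* C) {g : B →* C}
    (hg : Surjective g) (hfg : ∀ k ∈ K, f k.1 = g k.2) : commutator C = ⊤ := by
  -- Into an abelian group, `(a, b) ↦ g b / f a` is a homomorphism; it kills `K` and all
  -- commutators, hence everything.
  let χ : A × B →* Abelianization C :=
    (Abelianization.of.comp (g.comp (MonoidHom.snd A B))) /
      (Abelianization.of.comp (f.comp (MonoidHom.fst A B)))
  have hχ : K ⊔ commutator (A × B) ≤ χ.ker :=
    sup_le (fun k hk => by simp [χ, hfg k hk]) (Abelianization.commutator_subset_ker χ)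
  rw [hK, top_le_iff, MonoidHom.ker_eq_top_iff] at hχ
  refine eq_top_iff.mpr fun c _ => ?_
  obtain ⟨b, rfl⟩ := hg c
  rw [← Abelianization.ker_of, MonoidHom.mem_ker]
  simpa [χ] using DFunLike.congr_fun hχ (1, b)

theorem eq_top_of_goursatSnd_eq_top {A B : Type*} [Group A] [Group B]
    {K : Subgroup (A × B)} (hK : Surjective (Prod.fst ∘ K.subtype)) (hN : K.goursatSnd = ⊤) :
    K = ⊤ := by
  refine eq_top_iff.mpr fun x _ => ?_
  obtain ⟨k, hk⟩ := hK x.1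
  have hx : x = (k : A × B) * (1, (k : A × B).2⁻¹ * x.2) := by
    ext
    · simpa using hk.symm
    · simp
  rw [hx]
  exact mul_mem k.2 (Subgroup.mem_goursatSnd.mp (hN ▸ Subgroup.mem_top _))

theorem eq_top_of_subdirect_prod {A B : Type*} [Group A] [Group B] [Finite B]
    (hAB : ¬ SharesNonabelianSimpleQuotient A B) {K : Subgroup (A × B)}
    (hfst : K.map (MonoidHom.fst A B) = ⊤) (hsnd : K.map (MonoidHom.snd A B) = ⊤)
    (hK : K ⊔ commutator (A × B) = ⊤) : K = ⊤ := by
  have h₁ : Surjective (Prod.fst ∘ K.subtype) := by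
    rwa [← MonoidHom.coe_fst, ← MonoidHom.coe_comp, ← MonoidHom.range_eq_top,
      MonoidHom.range_comp, Subgroup.range_subtype]
  have h₂ : Surjective (Prod.snd ∘ K.subtype) := by
    rwa [← MonoidHom.coe_snd, ← MonoidHom.coe_comp, ← MonoidHom.range_eq_top,
      MonoidHom.range_comp, Subgroup.range_subtype]
  have := Subgroup.normal_goursatFst h₁
  have := Subgroup.normal_goursatSnd h₂
  obtain ⟨e, he⟩ := Subgroup.goursat_surjective h₁ h₂
  by_contra hne
  have : Nontrivial (B ⧸ K.goursatSnd) := by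
    rw [← not_subsingleton_iff_nontrivial, QuotientGroup.subsingleton_iff]
    exact mt (eq_top_of_goursatSnd_eq_top h₁) hne
  let f : A →* B ⧸ K.goursatSnd := e.toMonoidHom.comp (QuotientGroup.mk' _)
  have hf : Surjective f := e.surjective.comp (QuotientGroup.mk'_surjective _)
  have hfK : ∀ k ∈ K, f k.1 = k.2 := fun k hk => by
    have : ((k.1 : A ⧸ K.goursatFst), (k.2 : B ⧸ K.goursatSnd)) ∈ e.toMonoidHom.graph :=
      he ▸ ⟨⟨k, hk⟩, rfl⟩
    exact MonoidHom.mem_graph.mp this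
  obtain ⟨S, _, hSfin, hSsimple, hSnab, φ, hφ⟩ :=
    exists_nonabelian_simple_quotient_of_commutator_eq_top _
      (commutator_eq_top_of_sup_commutator_prod_eq_top hK f
        (QuotientGroup.mk'_surjective _) hfK)
  exact hAB ⟨S, _, hSfin, hSsimple, hSnab, ⟨φ.comp f, hφ.comp hf⟩,
    ⟨φ.comp (QuotientGroup.mk' _), hφ.comp (QuotientGroup.mk'_surjective _)⟩⟩

def MulEquiv.piSplitAt {ι : Type*} [DecidableEq ι] (i : ι) (Q : ι → Type*) [∀ j, Mul (Q j)] :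
    (∀ j, Q j) ≃* Q i × ∀ j : {j // j ≠ i}, Q j :=
  { Equiv.piSplitAt i Q with map_mul' := fun _ _ => rfl }

theorem eq_top_of_subdirect_pi {ι : Type*} [Finite ι] {Q : ι → Type*} [∀ i, Group (Q i)]
    [∀ i, Finite (Q i)] (hQ : Pairwise fun i j => ¬ SharesNonabelianSimpleQuotient (Q i) (Q j))
    {K : Subgroup (∀ i, Q i)} (hproj : ∀ i, K.map (Pi.evalMonoidHom Q i) = ⊤)
    (hK : K ⊔ commutator (∀ i, Q i) = ⊤) : K = ⊤ := by
  classical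
  induction hn : Nat.card ι using Nat.strong_induction_on generalizing ι with
  | _ n ih =>
  rcases isEmpty_or_nonempty ι with _ | ⟨⟨i⟩⟩
  · exact eq_top_iff.mpr fun x _ => Subsingleton.elim x 1 ▸ one_mem K
  let e := MulEquiv.piSplitAt i Q
  have hcard : Nat.card {j // j ≠ i} < n := hn ▸ Finite.card_subtype_lt (not_not_intro rfl)
  have hsnd : (K.map e.toMonoidHom).map (MonoidHom.snd _ _) = ⊤ := by
    refine ih _ hcard (Q := fun j : {j // j ≠ i} => Q j)
      (hQ.comp_of_injective Subtype.val_injective) (fun j => ?_) ?_ rfl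
    · rw [Subgroup.map_map, Subgroup.map_map]
      exact hproj j
    · rw [Subgroup.map_map]
      exact map_sup_commutator_eq_top hK (Prod.snd_surjective.comp e.surjective)
  have hfst : (K.map e.toMonoidHom).map (MonoidHom.fst _ _) = ⊤ := by
    rw [Subgroup.map_map]
    exact hproj i
  have hAB : ¬ SharesNonabelianSimpleQuotient (Q i) (∀ j : {j // j ≠ i}, Q j) :=
    not_sharesNonabelianSimpleQuotient_pi fun j => hQ j.2.symm
  have hKe : K.map e.toMonoidHom = ⊤ :=
    eq_top_of_subdirect_prod hAB hfst hsnd (map_sup_commutator_eq_top hK e.surjective)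
  rw [← Subgroup.comap_map_eq_self_of_injective (f := e.toMonoidHom) e.injective K, hKe,
    Subgroup.comap_top]

theorem sup_eq_top_of_surjective_mk {G : Type*} [Group G] {H N : Subgroup G} [N.Normal]
    (h : Surjective fun x : H => (x : G ⧸ N)) : H ⊔ N = ⊤ := by
  refine eq_top_iff.mpr fun g _ => ?_
  obtain ⟨x, hx⟩ := h g
  rw [← mul_inv_cancel_left (x : G) g]
  exact mul_mem (Subgroup.mem_sup_left x.2) (Subgroup.mem_sup_right (QuotientGroup.eq.mp hx))

theorem topologicalClosure_commutator_le_comap {G Q : Type*} [Group G] [TopologicalSpace G]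
    [IsTopologicalGroup G] [Group Q] [TopologicalSpace Q] {f : G →* Q} (hf : Continuous f)
    (hQ : IsClosed (commutator Q : Set Q)) :
    (commutator G).topologicalClosure ≤ (commutator Q).comap f :=
  Subgroup.topologicalClosure_minimal _
    (by rw [← Subgroup.map_le_iff_le_comap, commutator_def, Subgroup.map_commutator]
        exact Subgroup.commutator_mono le_top le_top)
    (hQ.preimage hf)

theorem exists_continuous_surjective_of_quotient {G S : Type*} [Group G] [TopologicalSpace G]
    [IsTopologicalGroup G] [Group S] [TopologicalSpace S] {N : Subgroup G} [N.Normal]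
    (hN : IsOpen (N : Set G)) {f : G ⧸ N →* S} (hf : Surjective f) :
    ∃ f' : G →* S, Continuous f' ∧ Surjective f' :=
  have := QuotientGroup.discreteTopology hN
  ⟨f.comp (QuotientGroup.mk' N),
    (continuous_of_discreteTopology (f := f)).comp continuous_quot_mk,
    hf.comp (QuotientGroup.mk'_surjective N)⟩

section Profinite

variable {ι : Type*} {G : ι → Type*} [∀ i, Group (G i)] [∀ i, TopologicalSpace (G i)]
  [∀ i, IsTopologicalGroup (G i)] [∀ i, CompactSpace (G i)]

theorem dense_of_forall_exists_inv_mul_mem [∀ i, TotallyDisconnectedSpace (G i)]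
    {H : Set (∀ i, G i)}
    (hH : ∀ (s : Finset ι) (N : ∀ i : s, OpenNormalSubgroup (G i)) (x : ∀ i, G i),
      ∃ y ∈ H, ∀ i : s, (x i)⁻¹ * y i ∈ N i) :
    Dense H := by
  refine dense_iff_inter_open.mpr fun U hU ⟨x, hxU⟩ => ?_
  obtain ⟨s, u, hu, hsU⟩ := isOpen_pi_iff.mp hU x hxU
  have hN : ∀ i : s, ∃ N : OpenNormalSubgroup (G i), (N : Set (G i)) ⊆ (x i * ·) ⁻¹' u i :=
    fun i => ProfiniteGrp.exist_openNormalSubgroup_sub_open_nhds_of_one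
      ((hu i i.2).1.preimage (continuous_const_mul _)) (by simpa using (hu i i.2).2)
  choose N hN using hN
  obtain ⟨y, hyH, hy⟩ := hH s N x
  exact ⟨y, hsU fun i hi => by simpa using hN ⟨i, hi⟩ (hy ⟨i, hi⟩), hyH⟩

theorem exists_inv_mul_mem_of_subdirect {s : Finset ι} (N : ∀ i : s, OpenNormalSubgroup (G i))
    (hN : Pairwise fun i j : s => ¬ SharesNonabelianSimpleQuotient
      (G i ⧸ (N i : Subgroup (G i))) (G j ⧸ (N j : Subgroup (G j))))
    {H : Subgroup (∀ i, G i)} (hproj : ∀ i, Surjective fun h : H => (h : ∀ j, G j) i)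
    (hH : H ⊔ (commutator (∀ i, G i)).topologicalClosure = ⊤) (x : ∀ i, G i) :
    ∃ y ∈ H, ∀ i : s, (x i)⁻¹ * y i ∈ N i := by
  let Q : s → Type _ := fun i => G i ⧸ (N i : Subgroup (G i))
  have : ∀ i, DiscreteTopology (Q i) := fun i => QuotientGroup.discreteTopology (N i).isOpen
  have : ∀ i, Finite (Q i) := fun i => Subgroup.quotient_finite_of_isOpen _ (N i).isOpen
  let π : (∀ i, G i) →* ∀ i, Q i :=
    MonoidHom.pi fun i => (QuotientGroup.mk' _).comp (Pi.evalMonoidHom G i)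
  have hπ : Continuous π := continuous_pi fun i => continuous_quot_mk.comp (continuous_apply _)
  have hproj' : ∀ i, (H.map π).map (Pi.evalMonoidHom Q i) = ⊤ := by
    refine fun i => eq_top_iff.mpr fun q _ => ?_
    obtain ⟨a, rfl⟩ := QuotientGroup.mk_surjective q
    obtain ⟨h, rfl⟩ := hproj i a
    exact ⟨π h, Subgroup.mem_map_of_mem π h.2, rfl⟩
  have hsup : H.map π ⊔ commutator (∀ i, Q i) = ⊤ := by
    refine eq_top_iff.mpr ?_
    rw [← Subgroup.map_top_of_surjective π ?_, ← hH, Subgroup.map_sup]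
    · exact sup_le_sup_left (Subgroup.map_le_iff_le_comap.mpr
        (topologicalClosure_commutator_le_comap hπ (isClosed_discrete _))) _
    · exact (Surjective.piMap fun i => QuotientGroup.mk_surjective).comp
        (Subtype.surjective_restrict _)
  obtain ⟨y, hyH, hy⟩ := eq_top_of_subdirect_pi hN hproj' hsup ▸ Subgroup.mem_top (π x)
  exact ⟨y, hyH, fun i => QuotientGroup.eq.mp (congr_fun hy i).symm⟩

end Profinite

theorem closed_subgroup_eq_top_of_surjections_general {ι : Type*} {G : ι → Type*}
    [∀ i, Group (G i)] [∀ i, TopologicalSpace (G i)] [∀ i, IsTopologicalGroup (G i)]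
    [∀ i, CompactSpace (G i)] [∀ i, TotallyDisconnectedSpace (G i)]
    (hdisj : ∀ i j : ι, i ≠ j →
      ¬ ∃ (S : Type) (instS : Group S),
        letI := instS
        letI : TopologicalSpace S := ⊥
        Finite S ∧ IsSimpleGroup S ∧ (¬ ∀ a b : S, a * b = b * a) ∧
          (∃ f : G i →* S, Continuous f ∧ Function.Surjective f) ∧
          (∃ g : G j →* S, Continuous g ∧ Function.Surjective g))
    (H : Subgroup (∀ i, G i)) (hHc : IsClosed (H : Set (∀ i, G i)))
    (hproj : ∀ i : ι, Function.Surjective (fun h : H => (h : ∀ j, G j) i))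
    (hquot : Function.Surjective (fun h : H =>
      (QuotientGroup.mk (h : ∀ i, G i) :
        (∀ i, G i) ⧸ (commutator (∀ i, G i)).topologicalClosure))) :
    H = ⊤ := by
  have hdisj' (s : Finset ι) (N : ∀ i : s, OpenNormalSubgroup (G i)) :
      Pairwise fun i j : s => ¬ SharesNonabelianSimpleQuotient
        (G i ⧸ (N i : Subgroup (G i))) (G j ⧸ (N j : Subgroup (G j))) := by
    rintro i j hij ⟨S, _, hfin, hsimple, hnab, ⟨f, hf⟩, g, hg⟩
    let _ : TopologicalSpace S := ⊥
    exact hdisj i j (Subtype.coe_ne_coe.mpr hij) ⟨S, _, hfin, hsimple, hnab,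
      exists_continuous_surjective_of_quotient (N i).isOpen hf,
      exists_continuous_surjective_of_quotient (N j).isOpen hg⟩
  have hdense : Dense (H : Set (∀ i, G i)) := dense_of_forall_exists_inv_mul_mem fun s N x =>
    exists_inv_mul_mem_of_subdirect N (hdisj' s N) hproj (sup_eq_top_of_surjective_mk hquot) x
  rw [← SetLike.coe_set_eq, Subgroup.coe_top, ← hdense.closure_eq, hHc.closure_eq]

/-- Let `(G i)` be a family of profinite groups such that no two distinct factors share a
finite nonabelian simple continuous quotient.  If `H` is a closed subgroup of `G = ∏ i, G i`
which surjects onto every factor and onto `G / cl([G,G])`, then `H = G`. -/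
theorem closed_subgroup_eq_top_of_surjections {ι : Type*} {G : ι → Type*}
    [∀ i, Group (G i)] [∀ i, TopologicalSpace (G i)] [∀ i, IsTopologicalGroup (G i)]
    [∀ i, CompactSpace (G i)] [∀ i, T2Space (G i)] [∀ i, TotallyDisconnectedSpace (G i)]
    (hdisj : ∀ i j : ι, i ≠ j →
      ¬ ∃ (S : Type) (instS : Group S),
        letI := instS
        letI : TopologicalSpace S := ⊥
        Finite S ∧ IsSimpleGroup S ∧ (¬ ∀ a b : S, a * b = b * a) ∧
          (∃ f : G i →* S, Continuous f ∧ Function.Surjective f) ∧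
          (∃ g : G j →* S, Continuous g ∧ Function.Surjective g))
    (H : Subgroup (∀ i, G i)) (hHc : IsClosed (H : Set (∀ i, G i)))
    (hproj : ∀ i : ι, Function.Surjective (fun h : H => (h : ∀ j, G j) i))
    (hquot : Function.Surjective (fun h : H =>
      (QuotientGroup.mk (h : ∀ i, G i) :
        (∀ i, G i) ⧸ (commutator (∀ i, G i)).topologicalClosure))) :
    H = ⊤ :=
  closed_subgroup_eq_top_of_surjections_general hdisj H hHc hproj hquot
end

section
/- Let G be a group and z a central element of G with z ≠ 1 and z² = 1. Let H be a subgroup of G with z ∉ H such that for every g ∈ G either g ∈ H or z·g ∈ H. Let K be a subgroup of G with z ∈ K such that [H,H] = H ∩ K. Then [G,G] = H ∩ K, and H ∩ K is a subgroup of index 2 in K. -/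
open scoped commutatorElement

namespace Subgroup

variable {G : Type*} [Group G]

theorem commutatorElement_mul_left_of_mem_center {c : G} (hc : c ∈ center G) (a b : G) :
    ⁅c * a, b⁆ = ⁅a, b⁆ := by
  have hca : Commute c (a * b * a⁻¹) := (mem_center_iff.mp hc _).symm
  calc ⁅c * a, b⁆ = c * (a * b * a⁻¹) * c⁻¹ * b⁻¹ := by group
    _ = ⁅a, b⁆ := by rw [hca.mul_inv_cancel, commutatorElement_def]

theorem commutatorElement_mul_right_of_mem_center {c : G} (hc : c ∈ center G) (a b : G) :
    ⁅a, c * b⁆ = ⁅a, b⁆ := by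
  rw [← commutatorElement_inv, commutatorElement_mul_left_of_mem_center hc, commutatorElement_inv]

theorem commutator_eq_of_forall_exists_center_mul_mem (H : Subgroup G)
    (hH : ∀ g : G, ∃ c ∈ center G, c * g ∈ H) : _root_.commutator G = ⁅H, H⁆ := by
  refine le_antisymm ?_ (commutator_mono le_top le_top)
  rw [_root_.commutator_def, commutator_le]
  intro a _ b _
  obtain ⟨c, hc, hca⟩ := hH a
  obtain ⟨d, hd, hdb⟩ := hH b
  rw [← commutatorElement_mul_left_of_mem_center hc, ← commutatorElement_mul_right_of_mem_center hd]
  exact commutator_mem_commutator hca hdb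

end Subgroup

open Subgroup in
theorem commutator_eq_inf_and_index_two_general {G : Type*} [Group G]
    (z : G) (hz : z ∈ Subgroup.center G)
    (H : Subgroup G) (hzH : z ∉ H) (hcover : ∀ g : G, g ∈ H ∨ z * g ∈ H)
    (K : Subgroup G) (hzK : z ∈ K) (hHK : ⁅H, H⁆ = H ⊓ K) :
    commutator G = H ⊓ K ∧ (H ⊓ K).relIndex K = 2 := by
  refine ⟨?_, ?_⟩
  · rw [← hHK]
    refine commutator_eq_of_forall_exists_center_mul_mem H fun g => ?_
    rcases hcover g with hg | hzg
    · exact ⟨1, one_mem _, by rwa [one_mul]⟩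
    · exact ⟨z, hz, hzg⟩
  · rw [inf_relIndex_right, relIndex_eq_two_iff_exists_notMem_and']
    exact ⟨z, hzK, hzH, fun b _ => (hcover b).symm⟩

/-- Let `z` be a nontrivial central element of order dividing 2, `H` a subgroup avoiding `z`
with `g ∈ H` or `z·g ∈ H` for every `g`, and `K` a subgroup containing `z` with
`[H,H] = H ⊓ K`.  Then `[G,G] = H ⊓ K` and `H ⊓ K` has index 2 in `K`. -/
theorem commutator_eq_inf_and_index_two {G : Type*} [Group G]
    (z : G) (hz : z ∈ Subgroup.center G) (hz1 : z ≠ 1) (hz2 : z ^ 2 = 1)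
    (H : Subgroup G) (hzH : z ∉ H) (hcover : ∀ g : G, g ∈ H ∨ z * g ∈ H)
    (K : Subgroup G) (hzK : z ∈ K) (hHK : ⁅H, H⁆ = H ⊓ K) :
    commutator G = H ⊓ K ∧ (H ⊓ K).relIndex K = 2 :=
  commutator_eq_inf_and_index_two_general z hz H hzH hcover K hzK hHK
end

section
/- Let G = ∏_{p prime} GL₂(ℤ_p), the direct product over all primes p of the groups GL₂(ℤ_p), with the product topology. Then the topological closure of the commutator subgroup of G is a subgroup of index 2 in the subgroup ∏_{p prime} SL₂(ℤ_p) of G. -/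
/-!
For odd `p`, `2` is a unit of `ℤ_p`. Every `g ∈ SL₂(ℤ_p)` whose top left entry is a unit factors
as `e₂₁(b) · diag(u, u⁻¹) · e₁₂(c)`, and `diag(u, u⁻¹) = ⁅diag(u, 1), w⁆` for the swap `w`, while
`e₁₂(2y) = ⁅diag(-1, 1), e₁₂(-y)⁆`; so `[GL₂(ℤ_p), GL₂(ℤ_p)] = SL₂(ℤ_p)`.
For `p = 2` the same factorisation puts the level-`2` congruence subgroup of `SL₂(ℤ₂)` inside the
commutator subgroup, and the sign of `GL₂(𝔽₂) ≅ S₃` gives a character of order two on `GL₂(ℤ₂)`;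
the commutator subgroup is exactly its kernel in `SL₂(ℤ₂)`.
All local commutator subgroups are thus closed, the closure of the commutator subgroup of the
product is their product (finitely supported elements are dense), and that product has index `2`
in `∏ SL₂(ℤ_p)`.
-/

instance (p : Nat.Primes) : Fact (p : ℕ).Prime := ⟨p.2⟩

/-- `GL₂(ℤ_p)`: the unit group of the ring of 2×2 matrices over the `p`-adic integers, with its
natural topology. -/
abbrev GL2Zp (p : Nat.Primes) : Type := (Matrix (Fin 2) (Fin 2) ℤ_[(p : ℕ)])ˣ

/-- `SL₂(ℤ_p)` as the subgroup of `GL₂(ℤ_p)` of elements of determinant `1`. -/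
noncomputable def SL2Zp (p : Nat.Primes) : Subgroup (GL2Zp p) :=
  (Units.map (Matrix.detMonoidHom : Matrix (Fin 2) (Fin 2) ℤ_[(p : ℕ)] →* ℤ_[(p : ℕ)])).ker

open Matrix
open scoped MatrixGroups commutatorElement

lemma commutatorElement_mem_commutator {G : Type*} [Group G] (g h : G) :
    ⁅g, h⁆ ∈ commutator G :=
  Subgroup.commutator_mem_commutator (Subgroup.mem_top g) (Subgroup.mem_top h)

namespace Matrix.GeneralLinearGroup

variable {n R S : Type*} [Fintype n] [DecidableEq n] [CommRing R] [CommRing S]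

lemma mem_ker_det_iff {g : GL n R} : g ∈ det.ker ↔ g.val.det = 1 := by
  rw [MonoidHom.mem_ker, Units.ext_iff]
  rfl

variable [TopologicalSpace R] [TopologicalSpace S]

lemma continuous_map {f : R →+* S} (hf : Continuous f) : Continuous (map (n := n) f) :=
  Units.continuous_iff.mpr
    ⟨Units.continuous_val.matrix_map hf, Units.continuous_coe_inv.matrix_map hf⟩

lemma isClosed_ker_det [IsTopologicalRing R] [T1Space R] :
    IsClosed ((det : GL n R →* Rˣ).ker : Set (GL n R)) := by
  have hker : ((det : GL n R →* Rˣ).ker : Set (GL n R)) =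
      (fun g : GL n R => g.val.det) ⁻¹' {1} := by
    ext g
    exact mem_ker_det_iff
  rw [hker]
  exact isClosed_singleton.preimage Units.continuous_val.matrix_det

end Matrix.GeneralLinearGroup

lemma PadicInt.continuous_toZMod {p : ℕ} [Fact p.Prime] :
    Continuous (PadicInt.toZMod : ℤ_[p] → ZMod p) := by
  refine continuous_of_continuousAt_zero PadicInt.toZMod ?_
  rw [ContinuousAt, map_zero, nhds_discrete (ZMod p), Filter.tendsto_pure]
  filter_upwards [Metric.ball_mem_nhds (0 : ℤ_[p]) one_pos] with x hx
  rw [← RingHom.mem_ker, PadicInt.ker_toZMod, IsLocalRing.mem_maximalIdeal,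
    PadicInt.mem_nonunits]
  simpa using hx

lemma PadicInt.isUnit_two {p : ℕ} [Fact p.Prime] (hp : p ≠ 2) : IsUnit (2 : ℤ_[p]) :=
  PadicInt.isUnit_iff.mpr <| by
    exact_mod_cast PadicInt.norm_natCast_eq_one_iff.mpr
      ((Nat.coprime_primes Fact.out Nat.prime_two).mpr hp)

namespace GL2

variable {R S : Type*} [CommRing R] [CommRing S]

def upper (x : R) : GL (Fin 2) R :=
  ⟨!![1, x; 0, 1], !![1, -x; 0, 1], by simp [one_fin_two], by simp [one_fin_two]⟩

def lower (x : R) : GL (Fin 2) R :=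
  ⟨!![1, 0; x, 1], !![1, 0; -x, 1], by simp [one_fin_two], by simp [one_fin_two]⟩

def swap : GL (Fin 2) R :=
  ⟨!![0, 1; 1, 0], !![0, 1; 1, 0], by simp [one_fin_two], by simp [one_fin_two]⟩

def diag (u v : Rˣ) : GL (Fin 2) R :=
  ⟨!![(u : R), 0; 0, (v : R)], !![((u⁻¹ : Rˣ) : R), 0; 0, ((v⁻¹ : Rˣ) : R)],
    by simp [one_fin_two], by simp [one_fin_two]⟩

lemma commutator_diag_upper (u : Rˣ) (y : R) :
    ⁅diag u 1, upper y⁆ = upper (((u : R) - 1) * y) := by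
  ext i j
  fin_cases i <;> fin_cases j <;>
    simp [commutatorElement_def, diag, upper]
  ring

lemma commutator_diag_swap (u : Rˣ) : ⁅diag u 1, (swap : GL (Fin 2) R)⁆ = diag u u⁻¹ := by
  ext i j
  fin_cases i <;> fin_cases j <;> simp [commutatorElement_def, diag, swap]

lemma swap_mul_upper_mul_swap_inv (x : R) : swap * upper x * swap⁻¹ = lower x := by
  ext i j
  fin_cases i <;> fin_cases j <;> simp [swap, upper, lower]

lemma det_upper (x : R) : (upper x).val.det = 1 := by
  simp [upper, det_fin_two]

lemma map_upper (f : R →+* S) (x : R) : GeneralLinearGroup.map f (upper x) = upper (f x) := by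
  ext i j
  fin_cases i <;> fin_cases j <;> simp [upper]

lemma map_lower (f : R →+* S) (x : R) : GeneralLinearGroup.map f (lower x) = lower (f x) := by
  ext i j
  fin_cases i <;> fin_cases j <;> simp [lower]

lemma eq_lower_mul_diag_mul_upper {g : GL (Fin 2) R} (hdet : g.val.det = 1) {u : Rˣ}
    (hu : (u : R) = g 0 0) :
    g = lower (g 1 0 * u⁻¹) * diag u u⁻¹ * upper (u⁻¹ * g 0 1) := by
  have hdet' : g 0 0 * g 1 1 - g 0 1 * g 1 0 = 1 := by rw [← hdet, det_fin_two]
  have hinv : ((u⁻¹ : Rˣ) : R) * g 0 0 = 1 := by rw [← hu, Units.inv_mul]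
  ext i j
  fin_cases i <;> fin_cases j <;> simp [lower, diag, upper, ← hu]
  linear_combination ((u⁻¹ : Rˣ) : R) * hdet' - g 1 1 * hinv

lemma upper_two_mul_mem_commutator (y : R) : upper (2 * y) ∈ commutator (GL (Fin 2) R) := by
  have h : ⁅diag (-1 : Rˣ) 1, upper (-y)⁆ = upper (2 * y) := by
    rw [commutator_diag_upper]
    congr 1
    push_cast
    ring
  exact h ▸ commutatorElement_mem_commutator _ _

lemma lower_mem_commutator_of_upper_mem {x : R} (h : upper x ∈ commutator (GL (Fin 2) R)) :
    lower x ∈ commutator (GL (Fin 2) R) :=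
  swap_mul_upper_mul_swap_inv x ▸ (Subgroup.commutator_normal ⊤ ⊤).conj_mem _ h swap

lemma diag_mem_commutator (u : Rˣ) : diag u u⁻¹ ∈ commutator (GL (Fin 2) R) :=
  commutator_diag_swap u ▸ commutatorElement_mem_commutator _ _

lemma mem_commutator_of_isUnit_of_two_dvd {g : GL (Fin 2) R} (hdet : g.val.det = 1)
    (h00 : IsUnit (g 0 0)) (h01 : 2 ∣ g 0 1) (h10 : 2 ∣ g 1 0) :
    g ∈ commutator (GL (Fin 2) R) := by
  obtain ⟨u, hu⟩ := h00
  obtain ⟨b, hb⟩ := h10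
  obtain ⟨c, hc⟩ := h01
  rw [eq_lower_mul_diag_mul_upper hdet hu, hb, hc, mul_assoc 2 b, mul_left_comm _ (2 : R) c]
  exact mul_mem (mul_mem (lower_mem_commutator_of_upper_mem (upper_two_mul_mem_commutator _))
    (diag_mem_commutator u)) (upper_two_mul_mem_commutator _)

lemma isUnit_or_isUnit_add_of_det_eq_one [IsLocalRing R] {g : GL (Fin 2) R}
    (hdet : g.val.det = 1) : IsUnit (g 0 0) ∨ IsUnit (g 0 0 + g 1 0) := by
  by_contra! h
  obtain ⟨h0, h1⟩ := h
  rw [← mem_nonunits_iff, ← IsLocalRing.mem_maximalIdeal] at h0 h1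
  have h1' : g 1 0 ∈ IsLocalRing.maximalIdeal R := by simpa using sub_mem h1 h0
  apply (IsLocalRing.maximalIdeal.isMaximal R).ne_top
  rw [Ideal.eq_top_iff_one, ← hdet, det_fin_two]
  exact sub_mem (Ideal.mul_mem_right _ _ h0) (Ideal.mul_mem_left _ _ h1')

theorem commutator_eq_ker_det_of_isUnit_two [IsLocalRing R] (h2 : IsUnit (2 : R)) :
    commutator (GL (Fin 2) R) = GeneralLinearGroup.det.ker := by
  refine le_antisymm (Abelianization.commutator_subset_ker _) fun g hg => ?_
  rw [GeneralLinearGroup.mem_ker_det_iff] at hg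
  have of_isUnit {g : GL (Fin 2) R} (hdet : g.val.det = 1) (hu : IsUnit (g 0 0)) :
      g ∈ commutator (GL (Fin 2) R) :=
    mem_commutator_of_isUnit_of_two_dvd hdet hu h2.dvd h2.dvd
  rcases isUnit_or_isUnit_add_of_det_eq_one hg with h | h
  · exact of_isUnit hg h
  · have hupper : upper (1 : R) ∈ commutator (GL (Fin 2) R) :=
      of_isUnit (det_upper 1) (by simp [upper])
    rw [← inv_mul_cancel_left (upper 1) g]
    refine mul_mem (inv_mem hupper) (of_isUnit ?_ ?_)
    · rw [Units.val_mul, det_mul, det_upper, hg, one_mul]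
    · simpa [upper, mul_apply, Fin.sum_univ_two] using h

/-- The sign of `GL₂(𝔽₂) ≅ S₃`, whose transpositions are the non-identity elements of trace `0`. -/
def signModTwo : GL (Fin 2) (ZMod 2) →* ℤˣ where
  toFun g := if g.val.trace = 0 ∧ g ≠ 1 then -1 else 1
  map_one' := by decide
  map_mul' := by decide

lemma eq_pow_commutator_of_signModTwo_eq_one :
    ∀ x : GL (Fin 2) (ZMod 2), signModTwo x = 1 →
      ∃ n : Fin 3, x = ⁅upper (1 : ZMod 2), lower 1⁆ ^ (n : ℕ) := by
  decide

lemma signModTwo_upper_one : signModTwo (upper (1 : ZMod 2)) = -1 := by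
  decide

noncomputable def dyadicSign : GL (Fin 2) ℤ_[2] →* ℤˣ :=
  signModTwo.comp (GeneralLinearGroup.map PadicInt.toZMod)

lemma dyadicSign_upper_one : dyadicSign (upper (1 : ℤ_[2])) = -1 := by
  rw [dyadicSign, MonoidHom.comp_apply, map_upper, map_one, signModTwo_upper_one]

lemma mem_commutator_of_map_toZMod_eq_one {g : GL (Fin 2) ℤ_[2]} (hdet : g.val.det = 1)
    (hg : GeneralLinearGroup.map PadicInt.toZMod g = 1) : g ∈ commutator (GL (Fin 2) ℤ_[2]) := by
  have hentry (i j : Fin 2) :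
      PadicInt.toZMod (g i j) = (1 : Matrix (Fin 2) (Fin 2) (ZMod 2)) i j := by
    rw [← GeneralLinearGroup.map_apply, hg]
    rfl
  have two_dvd {x : ℤ_[2]} (hx : PadicInt.toZMod x = 0) : 2 ∣ x := by
    rwa [← RingHom.mem_ker, PadicInt.ker_toZMod, PadicInt.maximalIdeal_eq_span_p,
      Ideal.mem_span_singleton, Nat.cast_ofNat] at hx
  refine mem_commutator_of_isUnit_of_two_dvd hdet ?_ (two_dvd (hentry 0 1)) (two_dvd (hentry 1 0))
  by_contra h
  rw [← mem_nonunits_iff, ← IsLocalRing.mem_maximalIdeal, ← PadicInt.ker_toZMod, RingHom.mem_ker,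
    hentry] at h
  exact one_ne_zero h

theorem commutator_eq_ker_det_inf_ker_dyadicSign :
    commutator (GL (Fin 2) ℤ_[2]) = GeneralLinearGroup.det.ker ⊓ dyadicSign.ker := by
  refine le_antisymm (le_inf (Abelianization.commutator_subset_ker _)
    (Abelianization.commutator_subset_ker _)) ?_
  rintro g ⟨hdet, hsign⟩
  obtain ⟨n, hn⟩ := eq_pow_commutator_of_signModTwo_eq_one _ hsign
  set c := ⁅upper (1 : ℤ_[2]), lower (1 : ℤ_[2])⁆ ^ (n : ℕ)
  have hc : c ∈ commutator (GL (Fin 2) ℤ_[2]) :=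
    pow_mem (commutatorElement_mem_commutator _ _) _
  rw [← mul_inv_cancel_left c g]
  refine mul_mem hc (mem_commutator_of_map_toZMod_eq_one ?_ ?_)
  · rw [← GeneralLinearGroup.mem_ker_det_iff]
    exact mul_mem (inv_mem (Abelianization.commutator_subset_ker _ hc)) hdet
  · rw [map_mul, map_inv, hn, map_pow, map_commutatorElement, map_upper, map_lower, map_one,
      inv_mul_cancel]

lemma isClosed_ker_dyadicSign : IsClosed (dyadicSign.ker : Set (GL (Fin 2) ℤ_[2])) :=
  (isClosed_discrete (signModTwo.ker : Set (GL (Fin 2) (ZMod 2)))).preimage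
    (GeneralLinearGroup.continuous_map PadicInt.continuous_toZMod)

end GL2

section Pi

variable {ι : Type*} {G : ι → Type*} [∀ i, Group (G i)]

lemma Pi.mulSingle_mem_commutator [DecidableEq ι] {i : ι} {x : G i}
    (hx : x ∈ commutator (G i)) : Pi.mulSingle i x ∈ commutator (∀ i, G i) := by
  have h := Subgroup.mem_map_of_mem (MonoidHom.mulSingle G i) hx
  rw [commutator_def, Subgroup.map_commutator] at h
  exact Subgroup.commutator_mono le_top le_top h

variable [∀ i, TopologicalSpace (G i)] [∀ i, IsTopologicalGroup (G i)]

lemma Subgroup.pi_le_topologicalClosure [DecidableEq ι] {H : Subgroup (∀ i, G i)}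
    {K : ∀ i, Subgroup (G i)} (hK : ∀ i, ∀ x ∈ K i, Pi.mulSingle i x ∈ H) :
    Subgroup.pi Set.univ K ≤ H.topologicalClosure := by
  intro g hg
  rw [← SetLike.mem_coe, Subgroup.topologicalClosure_coe, mem_closure_iff]
  intro o ho hgo
  obtain ⟨I, u, hIu, hsub⟩ := isOpen_pi_iff.mp ho g hgo
  refine ⟨I.piecewise g 1, hsub fun i hi => ?_, ?_⟩
  · rw [Finset.piecewise_eq_of_mem _ _ _ hi]
    exact (hIu i hi).2
  · refine Submonoid.pi_mem_of_mulSingle_mem_aux I _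
      (fun i hi => Finset.piecewise_eq_of_notMem _ _ _ hi) fun i hi => ?_
    rw [Finset.piecewise_eq_of_mem _ _ _ hi]
    exact hK i _ (hg i trivial)

theorem topologicalClosure_commutator_pi
    (hclosed : ∀ i, IsClosed (commutator (G i) : Set (G i))) :
    (commutator (∀ i, G i)).topologicalClosure =
      Subgroup.pi Set.univ fun i => commutator (G i) := by
  classical
  refine le_antisymm (Subgroup.topologicalClosure_minimal _ ?_ ?_) ?_
  · rw [commutator_def, ← Subgroup.pi_top Set.univ]
    exact Subgroup.commutator_pi_pi_le _ _
  · rw [Subgroup.coe_pi]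
    exact isClosed_set_pi fun i _ => hclosed i
  · exact Subgroup.pi_le_topologicalClosure fun i _ hx => Pi.mulSingle_mem_commutator hx

end Pi

def Nat.Primes.two : Nat.Primes := ⟨2, Nat.prime_two⟩

lemma commutator_GL2Zp_two :
    commutator (GL2Zp .two) = SL2Zp .two ⊓ GL2.dyadicSign.ker :=
  GL2.commutator_eq_ker_det_inf_ker_dyadicSign

lemma commutator_GL2Zp_of_ne_two {p : Nat.Primes} (hp : p ≠ .two) :
    commutator (GL2Zp p) = SL2Zp p :=
  GL2.commutator_eq_ker_det_of_isUnit_two (PadicInt.isUnit_two fun h => hp (Subtype.ext h))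

lemma isClosed_commutator_GL2Zp (p : Nat.Primes) :
    IsClosed (commutator (GL2Zp p) : Set (GL2Zp p)) := by
  rcases eq_or_ne p .two with rfl | hp
  · rw [commutator_GL2Zp_two]
    exact GeneralLinearGroup.isClosed_ker_det.inter GL2.isClosed_ker_dyadicSign
  · rw [commutator_GL2Zp_of_ne_two hp]
    exact GeneralLinearGroup.isClosed_ker_det

noncomputable def dyadicCharacter : (∀ p : Nat.Primes, GL2Zp p) →* ℤˣ :=
  GL2.dyadicSign.comp (Pi.evalMonoidHom (fun p => GL2Zp p) .two)

lemma pi_commutator_GL2Zp :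
    Subgroup.pi Set.univ (fun p => commutator (GL2Zp p)) =
      Subgroup.pi Set.univ SL2Zp ⊓ dyadicCharacter.ker := by
  ext g
  simp only [Subgroup.mem_inf, Subgroup.mem_pi, Set.mem_univ, forall_const]
  constructor
  · intro h
    refine ⟨fun p => Abelianization.commutator_subset_ker _ (h p), ?_⟩
    have h2 := h .two
    rw [commutator_GL2Zp_two] at h2
    exact h2.2
  · rintro ⟨hSL, hχ⟩ p
    rcases eq_or_ne p .two with rfl | hp
    · rw [commutator_GL2Zp_two]
      exact ⟨hSL _, hχ⟩
    · rw [commutator_GL2Zp_of_ne_two hp]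
      exact hSL p

lemma relIndex_inf_ker_dyadicCharacter :
    (Subgroup.pi Set.univ SL2Zp ⊓ dyadicCharacter.ker).relIndex (Subgroup.pi Set.univ SL2Zp) =
      2 := by
  have hsurj : (Subgroup.pi Set.univ SL2Zp).map dyadicCharacter = ⊤ := by
    refine eq_top_iff.mpr fun u _ => ?_
    rcases Int.units_eq_one_or u with rfl | rfl
    · exact one_mem _
    · refine ⟨Pi.mulSingle .two (GL2.upper 1), (Subgroup.mulSingle_mem_pi _ _).mpr fun _ =>
        GeneralLinearGroup.mem_ker_det_iff.mpr (GL2.det_upper (1 : ℤ_[2])), ?_⟩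
      have hcomponent : Pi.mulSingle (M := fun p => GL2Zp p) Nat.Primes.two
          (GL2.upper (1 : ℤ_[2])) Nat.Primes.two = GL2.upper 1 := Pi.mulSingle_eq_same _ _
      exact (congrArg GL2.dyadicSign hcomponent).trans GL2.dyadicSign_upper_one
  rw [Subgroup.inf_relIndex_left, Subgroup.relIndex_ker, hsurj, Subgroup.card_top,
    Nat.card_eq_fintype_card, Fintype.card_units_int]

/-- In `G = ∏_{p prime} GL₂(ℤ_p)`, the closure of the commutator subgroup is a subgroup of
index `2` in `∏_{p prime} SL₂(ℤ_p)`. -/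
theorem closure_commutator_index_two_in_sl2 :
    (commutator (∀ p : Nat.Primes, GL2Zp p)).topologicalClosure ≤
        Subgroup.pi Set.univ (fun p : Nat.Primes => SL2Zp p) ∧
      ((commutator (∀ p : Nat.Primes, GL2Zp p)).topologicalClosure).relIndex
        (Subgroup.pi Set.univ (fun p : Nat.Primes => SL2Zp p)) = 2 := by
  rw [topologicalClosure_commutator_pi isClosed_commutator_GL2Zp, pi_commutator_GL2Zp]
  exact ⟨inf_le_left, relIndex_inf_ker_dyadicCharacter⟩
end

section
/- Let l and l' be distinct primes. Then there is no finite nonabelian simple group S that is simultaneously a continuous quotient of GL₂(ℤ_l) and a continuous quotient of GL₂(ℤ_{l'}). -/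
/-!
Let `S` be a finite nonabelian simple continuous quotient of `GL₂(ℤ_p)`. The principal
congruence subgroup `ker (GL₂(ℤ_p) → GL₂(𝔽_p))` is pro-`p`, so its image in `S` is a normal
`p`-subgroup; a simple `p`-group is abelian, so the image is trivial and `S` is a quotient of
`GL₂(𝔽_p)`. Hence `|S|` divides `|GL₂(𝔽_p)| = (p² - 1)(p² - p)`, and `p` divides `|S|`:
otherwise every transvection, having order `p`, dies in `S`, so `SL₂(𝔽_p)` does too and `S` is a
quotient of the abelian group `𝔽_pˣ`. If `S` is a quotient for two primes `l < l'`, then `l'`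
divides `(l + 1)(l - 1)² l`, which forces `l' = l + 1`, i.e. `l = 2`, `l' = 3` and `|S| = 6`;
but a group of order `6` has a normal subgroup of index `2`.
-/

open Filter Topology Matrix MatrixGroups Polynomial
open scoped commutatorElement

theorem exists_one_add_natCast_mul_pow_pow_eq {A : Type*} [Ring A] (p k : ℕ) (y : A) :
    ∃ z : A, (1 + (p : A) * y) ^ p ^ k = 1 + (p : A) ^ (k + 1) * z := by
  obtain ⟨q, hq⟩ := dvd_sub_pow_of_dvd_sub (R := ℤ[X]) (p := p) (a := 1 + (p : ℤ[X]) * X)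
    (b := 1) (by simp) k
  refine ⟨aeval y q, ?_⟩
  rw [← sub_eq_iff_eq_add']
  simpa using congrArg (aeval y) hq

theorem exists_map_pow_eq_one_of_tendsto {G S : Type*} [Monoid G] [TopologicalSpace G] [Monoid S]
    [TopologicalSpace S] [DiscreteTopology S] {f : G →* S} (hf : Continuous f) {g : G}
    {u : ℕ → ℕ} (hg : Tendsto (fun k => g ^ u k) atTop (𝓝 1)) : ∃ k, f g ^ u k = 1 := by
  have := (hf.tendsto 1).comp hg
  rw [map_one, nhds_discrete, tendsto_pure] at this
  simpa using this.exists

theorem IsSimpleGroup.card_ne_two_mul_prime {G : Type*} [Group G] [IsSimpleGroup G] {q : ℕ}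
    (hq : q.Prime) : Nat.card G ≠ 2 * q := by
  intro hcard
  have : Fact q.Prime := ⟨hq⟩
  have : Finite G := Nat.finite_of_card_ne_zero (by simp [hcard, hq.ne_zero])
  obtain ⟨g, hg⟩ := exists_prime_orderOf_dvd_card' (G := G) q (hcard ▸ dvd_mul_left q 2)
  have hH : Nat.card (Subgroup.zpowers g) = q := by rw [Nat.card_zpowers, hg]
  have hindex : (Subgroup.zpowers g).index = 2 := by
    have := (Subgroup.zpowers g).card_mul_index
    rw [hH, hcard] at this
    exact Nat.eq_of_mul_eq_mul_left hq.pos (this.trans (mul_comm 2 q))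
  rcases (Subgroup.normal_of_index_eq_two hindex).eq_bot_or_eq_top with h | h
  · rw [h, Subgroup.card_bot] at hH
    exact hq.one_lt.ne hH
  · rw [h, Subgroup.index_top] at hindex
    omega

theorem Nat.Prime.eq_two_and_eq_three_of_dvd {l l' : ℕ} (hl : l.Prime) (hl' : l'.Prime)
    (hlt : l < l') (hdvd : l' ∣ (l ^ 2 - 1) * (l ^ 2 - l)) : l = 2 ∧ l' = 3 := by
  have hl1 := hl.one_lt
  have hfactor : (l ^ 2 - 1) * (l ^ 2 - l) = (l + 1) * ((l - 1) * (l * (l - 1))) := by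
    have : l ≤ l ^ 2 := Nat.le_self_pow two_ne_zero l
    zify [hl1.le, this, hl1.le.trans this]
    ring
  have hsmall : ∀ m, 0 < m → m < l' → ¬ l' ∣ m := fun m hm hml h =>
    (Nat.le_of_dvd hm h).not_gt hml
  have hsucc : l' = l + 1 := by
    rw [hfactor] at hdvd
    simp only [hl'.dvd_mul] at hdvd
    rcases hdvd with h | h | h | h
    · exact le_antisymm (Nat.le_of_dvd (by omega) h) hlt
    all_goals exact absurd h (hsmall _ (by omega) (by omega))
  rcases hl.eq_two_or_odd' with rfl | hodd
  · exact ⟨rfl, hsucc⟩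
  · have := hl'.even_iff.mp (hsucc ▸ hodd.add_one)
    omega

namespace Matrix

theorem GeneralLinearGroup.map_surjective {R S n : Type*} [CommRing R] [CommRing S] [Fintype n]
    [DecidableEq n] (f : R →+* S) [IsLocalHom f] (hf : Function.Surjective f) :
    Function.Surjective (GeneralLinearGroup.map (n := n) f) := by
  intro u
  set A : Matrix n n R := (u : Matrix n n S).map (Function.surjInv hf)
  have hA : f.mapMatrix A = u := by ext i j; exact Function.surjInv_eq hf _
  have hdet : IsUnit A.det := isUnit_of_map_unit f _ <| by
    rw [RingHom.map_det, hA]; exact (isUnit_iff_isUnit_det _).mp u.isUnit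
  obtain ⟨v, hv⟩ := (isUnit_iff_isUnit_det A).mpr hdet
  exact ⟨v, Units.ext <| by simp [GeneralLinearGroup.map, hv, ← hA]⟩

theorem GeneralLinearGroup.card_dvd_of_surjective {𝔽 G : Type*} [Field 𝔽] [Fintype 𝔽]
    [Group G] {ψ : GL (Fin 2) 𝔽 →* G} (hψ : Function.Surjective ψ) :
    Nat.card G ∣ (Fintype.card 𝔽 ^ 2 - 1) * (Fintype.card 𝔽 ^ 2 - Fintype.card 𝔽) := by
  simpa [card_GL_field, Fin.prod_univ_two] using Subgroup.card_dvd_of_surjective ψ hψ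

variable {F : Type*} [Field F]

theorem SpecialLinearGroup.transvection_pow_s16 {ι : Type*} [Fintype ι] [DecidableEq ι] {i j : ι}
    (hij : i ≠ j) (b : F) (m : ℕ) :
    SpecialLinearGroup.transvection hij b ^ m = SpecialLinearGroup.transvection hij (m * b) := by
  induction m with
  | zero => simp [SpecialLinearGroup.transvection_coeff_zero]
  | succ m ih => rw [pow_succ, ih, ← SpecialLinearGroup.transvection_add]; push_cast; ring_nf

theorem SpecialLinearGroup.transvection_pow_char_eq_one {ι : Type*} [Fintype ι] [DecidableEq ι]
    (p : ℕ) [CharP F p] {i j : ι} (hij : i ≠ j) (b : F) :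
    SpecialLinearGroup.transvection hij b ^ p = 1 := by
  rw [transvection_pow_s16, CharP.cast_eq_zero, zero_mul, transvection_coeff_zero]

theorem GeneralLinearGroup.commute_map_of_map_transvection_eq_one {G : Type*} [Group G]
    (ψ : GL (Fin 2) F →* G)
    (hψ : ∀ (i j : Fin 2) (hij : i ≠ j) (c : F),
      ψ (SpecialLinearGroup.toGL (SpecialLinearGroup.transvection hij c)) = 1)
    (a b : GL (Fin 2) F) : Commute (ψ a) (ψ b) := by
  have hSL : ∀ A : SL(2, F), ψ (SpecialLinearGroup.toGL A) = 1 :=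
    SL2.transvection_induction _ hψ fun A B hA hB => by simp [hA, hB]
  have hdet : ((⁅a, b⁆ : GL (Fin 2) F) : Matrix (Fin 2) (Fin 2) F).det = 1 := by
    have h : GeneralLinearGroup.det ⁅a, b⁆ = 1 := by
      rw [map_commutatorElement, commutatorElement_eq_one_iff_commute]
      exact Commute.all _ _
    exact congrArg Units.val h
  rw [← commutatorElement_eq_one_iff_commute, ← map_commutatorElement,
    show ⁅a, b⁆ = SpecialLinearGroup.toGL ⟨_, hdet⟩ from Units.ext rfl]
  exact hSL _

theorem GeneralLinearGroup.commute_map_of_not_dvd_card {G : Type*} [Group G] [Finite G]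
    {p : ℕ} (hp : p.Prime) [CharP F p] (hG : ¬ p ∣ Nat.card G) (ψ : GL (Fin 2) F →* G)
    (a b : GL (Fin 2) F) : Commute (ψ a) (ψ b) := by
  refine commute_map_of_map_transvection_eq_one ψ (fun i j hij c => ?_) a b
  rw [← orderOf_eq_one_iff]
  refine Nat.eq_one_of_dvd_coprimes ((Nat.Prime.coprime_iff_not_dvd hp).mpr hG)
    (orderOf_dvd_of_pow_eq_one ?_) (orderOf_dvd_natCard _)
  rw [← map_pow, ← map_pow, SpecialLinearGroup.transvection_pow_char_eq_one p, map_one, map_one]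

end Matrix

namespace PadicInt

variable {p : ℕ} [Fact p.Prime] {n : Type*} [Fintype n] [DecidableEq n]

theorem tendsto_natCast_pow_mul_nhds_zero (w : ℕ → ℤ_[p]) :
    Tendsto (fun k => (p : ℤ_[p]) ^ k * w k) atTop (𝓝 0) := by
  refine squeeze_zero_norm (fun k => ?_) <|
    tendsto_pow_atTop_nhds_zero_of_lt_one (norm_nonneg _) <| norm_p (p := p) ▸
      inv_lt_one_of_one_lt₀ (Nat.one_lt_cast.mpr (Fact.out : p.Prime).one_lt)
  rw [norm_mul, norm_pow]
  exact mul_le_of_le_one_right (by positivity) (norm_le_one _)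

theorem tendsto_matrix_natCast_pow_mul_nhds_zero (z : ℕ → Matrix n n ℤ_[p]) :
    Tendsto (fun k => (p : Matrix n n ℤ_[p]) ^ k * z k) atTop (𝓝 0) := by
  refine tendsto_pi_nhds.mpr fun i => tendsto_pi_nhds.mpr fun j => ?_
  simp_rw [← Nat.cast_pow, ← nsmul_eq_mul]
  simpa using tendsto_natCast_pow_mul_nhds_zero fun k => z k i j

noncomputable abbrev principalCongruenceSubgroup (p : ℕ) [Fact p.Prime] (n : Type*) [Fintype n]
    [DecidableEq n] : Subgroup (GL n ℤ_[p]) :=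
  (GeneralLinearGroup.map (toZMod (p := p))).ker

theorem exists_val_eq_one_add_natCast_mul {g : GL n ℤ_[p]}
    (hg : g ∈ principalCongruenceSubgroup p n) :
    ∃ y : Matrix n n ℤ_[p], (g : Matrix n n ℤ_[p]) = 1 + (p : Matrix n n ℤ_[p]) * y := by
  have hmem : ∀ i j, (g : Matrix n n ℤ_[p]) i j - (1 : Matrix n n ℤ_[p]) i j ∈
      Ideal.span {(p : ℤ_[p])} := by
    intro i j
    rw [← maximalIdeal_eq_span_p, ← ker_toZMod, RingHom.mem_ker, map_sub, sub_eq_zero]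
    have := congrArg (fun u : GL n (ZMod p) => (u : Matrix n n (ZMod p)) i j) hg
    simpa [GeneralLinearGroup.map, Matrix.one_apply, apply_ite] using this
  choose y hy using fun i j => Ideal.mem_span_singleton'.mp (hmem i j)
  refine ⟨Matrix.of y, Matrix.ext fun i j => ?_⟩
  rw [← nsmul_eq_mul, Matrix.add_apply, Matrix.smul_apply, Matrix.of_apply, nsmul_eq_mul]
  linear_combination -(hy i j)

theorem tendsto_val_pow_pow {g : GL n ℤ_[p]} (hg : g ∈ principalCongruenceSubgroup p n) :
    Tendsto (fun k => (g : Matrix n n ℤ_[p]) ^ p ^ k) atTop (𝓝 1) := by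
  obtain ⟨y, hy⟩ := exists_val_eq_one_add_natCast_mul hg
  choose z hz using fun k => exists_one_add_natCast_mul_pow_pow_eq p k y
  have := tendsto_matrix_natCast_pow_mul_nhds_zero fun k => (p : Matrix n n ℤ_[p]) * z k
  simpa [hy, hz, pow_succ, mul_assoc] using this.const_add 1

theorem tendsto_pow_pow {g : GL n ℤ_[p]} (hg : g ∈ principalCongruenceSubgroup p n) :
    Tendsto (fun k => g ^ p ^ k) atTop (𝓝 1) := by
  rw [Units.isInducing_embedProduct.tendsto_nhds_iff]
  refine (tendsto_val_pow_pow hg).prodMk_nhds ?_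
  have := (MulOpposite.continuous_op.tendsto _).comp (tendsto_val_pow_pow (inv_mem hg))
  simpa [Function.comp_def] using this

theorem isPGroup_map_principalCongruenceSubgroup {S : Type*} [Group S] [TopologicalSpace S]
    [DiscreteTopology S] {f : GL n ℤ_[p] →* S} (hf : Continuous f) :
    IsPGroup p ((principalCongruenceSubgroup p n).map f) := by
  rintro ⟨_, g, hg, rfl⟩
  obtain ⟨k, hk⟩ := exists_map_pow_eq_one_of_tendsto hf (tendsto_pow_pow hg)
  exact ⟨k, Subtype.ext hk⟩

section SimpleQuotient

variable {S : Type*} [Group S] [TopologicalSpace S] [DiscreteTopology S] [Finite S]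
  [IsSimpleGroup S]

theorem exists_surjective_of_isSimpleGroup (hS : ¬ ∀ a b : S, a * b = b * a)
    {f : GL n ℤ_[p] →* S} (hf : Continuous f) (hsurj : Function.Surjective f) :
    ∃ ψ : GL n (ZMod p) →* S, Function.Surjective ψ := by
  have hred : Function.Surjective (GeneralLinearGroup.map (n := n) (toZMod (p := p))) :=
    have := IsLocalHom.of_surjective _ (ZMod.ringHom_surjective (toZMod (p := p)))
    GeneralLinearGroup.map_surjective _ (ZMod.ringHom_surjective _)
  have hnormal : ((principalCongruenceSubgroup p n).map f).Normal :=
    (MonoidHom.normal_ker _).map f hsurj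
  rcases hnormal.eq_bot_or_eq_top with hbot | htop
  · refine ⟨(GeneralLinearGroup.map toZMod).liftOfSurjective hred
      ⟨f, (Subgroup.map_eq_bot_iff _).mp hbot⟩, fun s => ?_⟩
    obtain ⟨g, rfl⟩ := hsurj s
    exact ⟨_, MonoidHom.liftOfRightInverse_comp_apply _ _ _ _ g⟩
  · have hP : IsPGroup p S :=
      (htop ▸ isPGroup_map_principalCongruenceSubgroup hf).of_equiv Subgroup.topEquiv
    have := hP.isNilpotent
    exact absurd (IsSimpleGroup.comm_iff_isSolvable.mpr inferInstance) hS

theorem prime_dvd_card_and_card_dvd (hS : ¬ ∀ a b : S, a * b = b * a)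
    {f : GL (Fin 2) ℤ_[p] →* S} (hf : Continuous f) (hsurj : Function.Surjective f) :
    p ∣ Nat.card S ∧ Nat.card S ∣ (p ^ 2 - 1) * (p ^ 2 - p) := by
  obtain ⟨ψ, hψ⟩ := exists_surjective_of_isSimpleGroup hS hf hsurj
  refine ⟨by_contra fun hp => hS fun a b => ?_, ?_⟩
  · obtain ⟨a, rfl⟩ := hψ a
    obtain ⟨b, rfl⟩ := hψ b
    exact GeneralLinearGroup.commute_map_of_not_dvd_card Fact.out hp ψ a b
  · simpa using GeneralLinearGroup.card_dvd_of_surjective hψ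

end SimpleQuotient

end PadicInt

/-- For distinct primes `l ≠ l'`, no finite nonabelian simple group is simultaneously a
continuous quotient of `GL₂(ℤ_l)` and of `GL₂(ℤ_{l'})`. -/
theorem no_common_simple_quotient_of_gl2_padic (l l' : Nat.Primes) (hll : l ≠ l') :
    ¬ ∃ (S : Type) (instS : Group S),
      letI := instS
      letI : TopologicalSpace S := ⊥
      Finite S ∧ IsSimpleGroup S ∧ (¬ ∀ a b : S, a * b = b * a) ∧
        (∃ f : GL2Zp l →* S, Continuous f ∧ Function.Surjective f) ∧
        (∃ g : GL2Zp l' →* S, Continuous g ∧ Function.Surjective g) := by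
  rintro ⟨S, instS, hfin, hsimple, hna, ⟨f, hfc, hfs⟩, ⟨g, hgc, hgs⟩⟩
  let : TopologicalSpace S := ⊥
  have : DiscreteTopology S := ⟨rfl⟩
  have key : ∀ q q' : ℕ, q.Prime → q'.Prime → q < q' →
      q ∣ Nat.card S ∧ Nat.card S ∣ (q ^ 2 - 1) * (q ^ 2 - q) → ¬ q' ∣ Nat.card S := by
    rintro q q' hq hq' hlt ⟨hqS, hSq⟩ hq'S
    obtain ⟨rfl, rfl⟩ := hq.eq_two_and_eq_three_of_dvd hq' hlt (hq'S.trans hSq)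
    exact IsSimpleGroup.card_ne_two_mul_prime (G := S) Nat.prime_three
      (Nat.dvd_antisymm hSq (Nat.Coprime.mul_dvd_of_dvd_of_dvd (by norm_num) hqS hq'S))
  have hl := PadicInt.prime_dvd_card_and_card_dvd hna hfc hfs
  have hl' := PadicInt.prime_dvd_card_and_card_dvd hna hgc hgs
  rcases lt_or_gt_of_ne (Nat.Primes.coe_nat_injective.ne hll) with h | h
  · exact key _ _ l.2 l'.2 h hl hl'.1
  · exact key _ _ l'.2 l.2 h hl' hl.1
end
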